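/- Let n ≥ 2, let τ₁, …, τ_{n−1} be 2×2 real orthogonal matrices, and let Q' be the augmented reflection-based Laplacian on ℝ^{2n} with designated index ℓ, unit normal n̂, and unit mirror direction L̂ (with n̂·L̂ = 0). Then for each agent i ∈ {1,…,n}, the i-th component of the solution p(t) = exp(−tQ')p(0) of ṗ = −Q'p satisfies lim_{t→∞} pᵢ(t) = (1/n)·SᵢL̂·⟨L̂, Σ_{k=1}^{n} S_kᵀ p_k(0)⟩. -/

import Mathlib

open Filter Topology Matrix

noncomputable section

abbrev Cfg (n : ℕ) := EuclideanSpace ℝ (Fin n × Fin 2)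

/-- Multiplication of a 2×2 matrix with a planar vector. -/
def mv (M : Matrix (Fin 2) (Fin 2) ℝ) (v : EuclideanSpace ℝ (Fin 2)) :
    EuclideanSpace ℝ (Fin 2) := WithLp.toLp 2 (M.mulVec v)

/-- Multiplication of a 2n×2n matrix with a configuration vector. -/
def mvC {n : ℕ} (M : Matrix (Fin n × Fin 2) (Fin n × Fin 2) ℝ) (v : Cfg n) : Cfg n :=
  WithLp.toLp 2 (M.mulVec v)

/-- The i-th planar component of a configuration. -/
def blk {n : ℕ} (p : Cfg n) (i : Fin n) : EuclideanSpace ℝ (Fin 2) :=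
  WithLp.toLp 2 (fun a => p (i, a))

/-- The action of the matrix-weighted Laplacian Q of the path graph on vertices 0, …, n-1
(with matrix weight τ e on the edge {e, e+1}):
(Qp)ᵢ = (pᵢ − τ_{i-1} p_{i-1}) + (pᵢ − τᵢᵀ p_{i+1}), where the first summand is omitted
for the first vertex and the second for the last. -/
def lapAct (n : ℕ) (τ : Fin (n - 1) → Matrix (Fin 2) (Fin 2) ℝ)
    (p : Fin n → EuclideanSpace ℝ (Fin 2)) (i : Fin n) : EuclideanSpace ℝ (Fin 2) :=
  (if h : 0 < (i : ℕ) then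
      p i - mv (τ ⟨(i : ℕ) - 1, by have := i.isLt; omega⟩)
        (p ⟨(i : ℕ) - 1, by have := i.isLt; omega⟩)
    else 0)
  + (if h : (i : ℕ) + 1 < n then
      p i - mv (τ ⟨(i : ℕ), by omega⟩)ᵀ (p ⟨(i : ℕ) + 1, h⟩)
    else 0)

/-- The action of the augmented reflection-based Laplacian Q', with designated index ℓ and
unit normal n̂: (Q'p)ᵢ = (Qp)ᵢ + [i = ℓ]·2(n̂·p_ℓ)n̂. -/
def lapAugAct (n : ℕ) (τ : Fin (n - 1) → Matrix (Fin 2) (Fin 2) ℝ) (ℓ : Fin n)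
    (nh : EuclideanSpace ℝ (Fin 2)) (p : Fin n → EuclideanSpace ℝ (Fin 2)) (i : Fin n) :
    EuclideanSpace ℝ (Fin 2) :=
  lapAct n τ p i + if i = ℓ then (2 * (inner ℝ nh (p ℓ) : ℝ)) • nh else 0

/-- V₀ = (S₁ L̂, …, Sₙ L̂). -/
def V0 {n : ℕ} (S : Fin n → Matrix (Fin 2) (Fin 2) ℝ) (L : EuclideanSpace ℝ (Fin 2)) : Cfg n :=
  WithLp.toLp 2 (fun x : Fin n × Fin 2 => mv (S x.1) L x.2)

/-- Left endpoint of edge e of the path graph, as a vertex. -/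
def eL {n : ℕ} (e : Fin (n - 1)) : Fin n := ⟨e, by have := e.isLt; omega⟩
/-- Right endpoint of edge e of the path graph, as a vertex. -/
def eR {n : ℕ} (e : Fin (n - 1)) : Fin n := ⟨(e : ℕ) + 1, by have := e.isLt; omega⟩

/-!
`Q'` is symmetric positive semidefinite, since
`⟨Q'p, q⟩ = Σₑ ⟨p_{e+1} − τₑ pₑ, q_{e+1} − τₑ qₑ⟩ + 2 ⟨n̂, p_ℓ⟩ ⟨n̂, q_ℓ⟩`.
Hence `Q'p = 0` forces `p_{e+1} = τₑ pₑ` along every edge and `p_ℓ ⊥ n̂`, i.e. `pᵢ = Sᵢ p_ℓ`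
with `p_ℓ ∈ ℝ L̂`: the kernel of `Q'` is the line spanned by `V₀ = (Sᵢ L̂)ᵢ`, and `‖V₀‖² = n`.
For a positive semidefinite matrix `A`, `exp(−tA) p` converges to the orthogonal projection of `p`
onto `ker A` (the components along eigenvalues `μ > 0` decay like `e^{−tμ}`), and projecting
`p(0)` onto `ℝ V₀` gives the formula.
-/

open scoped InnerProductSpace RealInnerProductSpace

namespace Matrix.IsHermitian

variable {ι : Type*} [Fintype ι] [DecidableEq ι] {A : Matrix ι ι ℝ} (hA : A.IsHermitian)
include hA

theorem exp_smul_mulVec_eigenvectorBasis (s : ℝ) (j : ι) :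
    NormedSpace.exp (s • A) *ᵥ ⇑(hA.eigenvectorBasis j) =
      Real.exp (s * hA.eigenvalues j) • ⇑(hA.eigenvectorBasis j) := by
  set U := hA.eigenvectorUnitary
  have hUinv : (U⁻¹ : Matrix ι ι ℝ) = star (U : Matrix ι ι ℝ) :=
    Matrix.inv_eq_right_inv (Unitary.coe_mul_star_self U)
  have hconj : s • A = U * diagonal (s • hA.eigenvalues) * (U⁻¹ : Matrix ι ι ℝ) := by
    conv_lhs => rw [hA.spectral_theorem]
    rw [Unitary.conjStarAlgAut_apply, hUinv, ← smul_mul_assoc, ← mul_smul_comm, diagonal_smul]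
    rfl
  rw [hconj, exp_conj _ _ Unitary.isUnit_coe, exp_diagonal, hUinv, ← mulVec_mulVec,
    ← mulVec_mulVec, star_eigenvectorUnitary_mulVec, diagonal_mulVec_single, mul_one]
  ext i
  simp [mulVec_single, U, Real.exp_eq_exp_ℝ, mul_comm]

theorem exp_smul_mulVec (s : ℝ) (v : EuclideanSpace ℝ ι) :
    WithLp.toLp 2 (NormedSpace.exp (s • A) *ᵥ v) =
      ∑ j, (Real.exp (s * hA.eigenvalues j) * ⟪hA.eigenvectorBasis j, v⟫) •
        hA.eigenvectorBasis j := by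
  conv_lhs => rw [← (hA.eigenvectorBasis).sum_repr' v]
  simp only [WithLp.ofLp_sum, WithLp.ofLp_smul, mulVec_sum, mulVec_smul,
    exp_smul_mulVec_eigenvectorBasis, WithLp.toLp_sum, WithLp.toLp_smul, smul_smul, mul_comm]

theorem starProjection_ker_toEuclideanLin (v : EuclideanSpace ℝ ι) :
    (LinearMap.ker (toEuclideanLin A)).starProjection v =
      ∑ j, (if hA.eigenvalues j = 0 then ⟪hA.eigenvectorBasis j, v⟫ else 0) •
        hA.eigenvectorBasis j := by
  have hT : (toEuclideanLin A).IsSymmetric := isSymmetric_toEuclideanLin_iff.mpr hA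
  have hb : ∀ j, toEuclideanLin A (hA.eigenvectorBasis j) =
      hA.eigenvalues j • hA.eigenvectorBasis j := fun j => by
    rw [toLpLin_apply, mulVec_eigenvectorBasis]; rfl
  refine Submodule.eq_starProjection_of_mem_of_inner_eq_zero ?_ fun w hw => ?_
  · refine Submodule.sum_mem _ fun j _ => ?_
    split_ifs with hj
    · exact Submodule.smul_mem _ _ (by rw [LinearMap.mem_ker, hb, hj, zero_smul])
    · rw [zero_smul]; exact Submodule.zero_mem _
  · have hbw : ∀ j, hA.eigenvalues j ≠ 0 → ⟪hA.eigenvectorBasis j, w⟫ = 0 := fun j hj => by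
      have := hT (hA.eigenvectorBasis j) w
      rw [hb, LinearMap.mem_ker.mp hw, inner_zero_right, real_inner_smul_left] at this
      exact (mul_eq_zero.mp this).resolve_left hj
    nth_rw 1 [← (hA.eigenvectorBasis).sum_repr' v]
    rw [← Finset.sum_sub_distrib, sum_inner]
    refine Finset.sum_eq_zero fun j _ => ?_
    split_ifs with hj
    · rw [sub_self, inner_zero_left]
    · rw [zero_smul, sub_zero, real_inner_smul_left, hbw j hj, mul_zero]

end Matrix.IsHermitian

theorem Real.tendsto_exp_neg_mul_of_nonneg {μ : ℝ} (hμ : 0 ≤ μ) :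
    Tendsto (fun t : ℝ => Real.exp (-t * μ)) atTop (𝓝 (if μ = 0 then 1 else 0)) := by
  split_ifs with h
  · simp [h]
  · have : Tendsto (fun t : ℝ => -t * μ) atTop atBot := by
      simpa [Function.comp_def, neg_mul] using
        tendsto_neg_atTop_atBot.comp (tendsto_id.atTop_mul_const (hμ.lt_of_ne' h))
    exact Real.tendsto_exp_atBot.comp this

theorem Matrix.PosSemidef.tendsto_exp_neg_smul_mulVec {ι : Type*} [Fintype ι] [DecidableEq ι]
    {A : Matrix ι ι ℝ} (hA : A.PosSemidef) (v : EuclideanSpace ℝ ι) :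
    Tendsto (fun t : ℝ => WithLp.toLp 2 (NormedSpace.exp ((-t) • A) *ᵥ v)) atTop
      (𝓝 ((LinearMap.ker (toEuclideanLin A)).starProjection v)) := by
  simp only [hA.isHermitian.exp_smul_mulVec, hA.isHermitian.starProjection_ker_toEuclideanLin]
  refine tendsto_finsetSum _ fun j _ => ?_
  convert ((Real.tendsto_exp_neg_mul_of_nonneg (hA.eigenvalues_nonneg j)).mul_const
    ⟪hA.isHermitian.eigenvectorBasis j, v⟫).smul_const (hA.isHermitian.eigenvectorBasis j) using 3
  split_ifs <;> simp

section Planar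

theorem mv_mv (M N : Matrix (Fin 2) (Fin 2) ℝ) (v : EuclideanSpace ℝ (Fin 2)) :
    mv M (mv N v) = mv (M * N) v :=
  congrArg (WithLp.toLp 2) (mulVec_mulVec _ M N)

theorem mv_one (v : EuclideanSpace ℝ (Fin 2)) : mv 1 v = v :=
  congrArg (WithLp.toLp 2) (one_mulVec _)

theorem inner_mv_transpose (M : Matrix (Fin 2) (Fin 2) ℝ) (u v : EuclideanSpace ℝ (Fin 2)) :
    ⟪mv Mᵀ u, v⟫ = ⟪u, mv M v⟫ := by
  simp only [mv, EuclideanSpace.inner_eq_star_dotProduct, star_trivial]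
  rw [mulVec_transpose, dotProduct_comm, ← dotProduct_mulVec, dotProduct_comm]

variable {M : Matrix (Fin 2) (Fin 2) ℝ} (hM : Mᵀ * M = 1)
include hM

theorem mv_transpose_mv (v : EuclideanSpace ℝ (Fin 2)) : mv Mᵀ (mv M v) = v := by
  rw [mv_mv, hM, mv_one]

theorem inner_mv_mv (u v : EuclideanSpace ℝ (Fin 2)) : ⟪mv M u, mv M v⟫ = ⟪u, v⟫ := by
  rw [← inner_mv_transpose, mv_transpose_mv hM]

theorem norm_mv (v : EuclideanSpace ℝ (Fin 2)) : ‖mv M v‖ = ‖v‖ := by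
  rw [norm_eq_sqrt_real_inner, inner_mv_mv hM, ← norm_eq_sqrt_real_inner]

end Planar

theorem eq_inner_smul_of_inner_eq_zero {E : Type*} [NormedAddCommGroup E] [InnerProductSpace ℝ E]
    (hE : Module.finrank ℝ E = 2) {u w v : E} (hu : u ≠ 0) (hw : ‖w‖ = 1) (huw : ⟪u, w⟫ = 0)
    (huv : ⟪u, v⟫ = 0) : v = ⟪w, v⟫ • w := by
  have : Fact (Module.finrank ℝ E = 1 + 1) := ⟨hE⟩
  have : FiniteDimensional ℝ E := .of_fact_finrank_eq_succ 1
  have hspan : ℝ ∙ w = (ℝ ∙ u)ᗮ := by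
    refine Submodule.eq_of_le_of_finrank_eq ?_ ?_
    · rw [Submodule.span_singleton_le_iff_mem, Submodule.mem_orthogonal_singleton_iff_inner_right]
      exact huw
    · rw [finrank_span_singleton (norm_ne_zero_iff.mp (hw ▸ one_ne_zero)),
        Submodule.finrank_orthogonal_span_singleton (n := 1) hu]
  have hv : v ∈ ℝ ∙ w := hspan ▸ (Submodule.mem_orthogonal_singleton_iff_inner_right.mpr huv)
  calc v = (ℝ ∙ w).starProjection v := (Submodule.starProjection_eq_self_iff.mpr hv).symm
    _ = ⟪w, v⟫ • w := by simp [Submodule.starProjection_singleton, hw]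

section PathGraph

variable {n : ℕ}

theorem iff_of_forall_eL_iff_eR {P : Fin n → Prop} (h : ∀ e : Fin (n - 1), P (eL e) ↔ P (eR e))
    (i j : Fin n) : P i ↔ P j := by
  have key : ∀ k (hk : k < n), P ⟨k, hk⟩ ↔ P ⟨0, by omega⟩ := by
    intro k
    induction k with
    | zero => intro _; rfl
    | succ k ih => intro hk; exact (h ⟨k, by omega⟩).symm.trans (ih (by omega))
  exact (key i i.2).trans (key j j.2).symm

def IsConsistent (τ : Fin (n - 1) → Matrix (Fin 2) (Fin 2) ℝ)
    (x : Fin n → EuclideanSpace ℝ (Fin 2)) : Prop :=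
  ∀ e, x (eR e) = mv (τ e) (x (eL e))

variable {τ : Fin (n - 1) → Matrix (Fin 2) (Fin 2) ℝ} {x y : Fin n → EuclideanSpace ℝ (Fin 2)}

theorem isConsistent_mv {S : Fin n → Matrix (Fin 2) (Fin 2) ℝ}
    (hS : ∀ e, S (eR e) = τ e * S (eL e)) (u : EuclideanSpace ℝ (Fin 2)) :
    IsConsistent τ (fun j => mv (S j) u) := fun e => by
  simp only [hS, mv_mv]

theorem IsConsistent.smul (hx : IsConsistent τ x) (c : ℝ) : IsConsistent τ (c • x) := fun e => by
  simp only [Pi.smul_apply, hx e, mv, WithLp.ofLp_smul, mulVec_smul, WithLp.toLp_smul]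

variable (hτ : ∀ e, (τ e)ᵀ * τ e = 1)
include hτ

theorem IsConsistent.eq_of_apply_eq (hx : IsConsistent τ x) (hy : IsConsistent τ y) {ℓ : Fin n}
    (h : x ℓ = y ℓ) : x = y := by
  refine funext fun i =>
    (iff_of_forall_eL_iff_eR (P := fun k => x k = y k) (fun e => ?_) i ℓ).mpr h
  simp only [hx e, hy e]
  exact ⟨congrArg _, fun h' => by rw [← mv_transpose_mv (hτ e) (x _), h', mv_transpose_mv (hτ e)]⟩

theorem IsConsistent.norm_eq (hx : IsConsistent τ x) (i j : Fin n) : ‖x i‖ = ‖x j‖ :=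
  iff_of_forall_eL_iff_eR (P := fun k => ‖x k‖ = ‖x j‖)
    (fun e => by simp only [hx e, norm_mv (hτ e)]) i j |>.mpr rfl

theorem lapAct_eq_zero_of_isConsistent (hx : IsConsistent τ x) (i : Fin n) :
    lapAct n τ x i = 0 := by
  have hl : ∀ h : 0 < (i : ℕ), x i = mv (τ ⟨i - 1, by omega⟩) (x ⟨i - 1, by omega⟩) := fun h => by
    have := hx ⟨(i : ℕ) - 1, by omega⟩
    rwa [show eR ⟨(i : ℕ) - 1, _⟩ = i from Fin.ext (by simp only [eR]; omega)] at this
  have hr : ∀ h : (i : ℕ) + 1 < n, x i = mv (τ ⟨i, by omega⟩)ᵀ (x ⟨i + 1, h⟩) := fun h => by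
    rw [show x ⟨i + 1, h⟩ = _ from hx ⟨i, by omega⟩, mv_transpose_mv (hτ _)]
    rfl
  unfold lapAct
  split_ifs with h1 h2 h2
  · rw [← hl h1, ← hr h2, sub_self, add_zero]
  · rw [← hl h1, sub_self, add_zero]
  · rw [← hr h2, sub_self, add_zero]
  · rw [add_zero]

end PathGraph

section QuadraticForm

variable {n : ℕ} {τ : Fin (n - 1) → Matrix (Fin 2) (Fin 2) ℝ}

theorem sum_inner_lapAct (p q : Fin n → EuclideanSpace ℝ (Fin 2)) :
    ∑ i, ⟪lapAct n τ p i, q i⟫ =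
      ∑ e, (⟪p (eR e) - mv (τ e) (p (eL e)), q (eR e)⟫ +
        ⟪p (eL e) - mv (τ e)ᵀ (p (eR e)), q (eL e)⟫) := by
  obtain _ | m := n
  · simp only [Finset.univ_eq_empty, Finset.sum_empty, Nat.zero_sub_one]
  simp only [lapAct, inner_add_left, Finset.sum_add_distrib]
  congr 1
  · rw [Fin.sum_univ_succ]
    simp only [Fin.val_zero, lt_self_iff_false, ↓reduceDIte, inner_zero_left, Fin.val_succ,
      Nat.zero_lt_succ, add_tsub_cancel_right, Fin.eta, zero_add]
    rfl
  · rw [Fin.sum_univ_castSucc]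
    simp only [Fin.val_castSucc, Fin.is_lt, Nat.add_lt_add_iff_right, ↓reduceDIte, Fin.eta,
      Fin.val_last, lt_self_iff_false, inner_zero_left, add_zero]
    rfl

variable (hτ : ∀ e, (τ e)ᵀ * τ e = 1)
include hτ

theorem sum_inner_lapAugAct (ℓ : Fin n) (nh : EuclideanSpace ℝ (Fin 2))
    (p q : Fin n → EuclideanSpace ℝ (Fin 2)) :
    ∑ i, ⟪lapAugAct n τ ℓ nh p i, q i⟫ =
      ∑ e, ⟪p (eR e) - mv (τ e) (p (eL e)), q (eR e) - mv (τ e) (q (eL e))⟫ +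
        2 * ⟪nh, p ℓ⟫ * ⟪nh, q ℓ⟫ := by
  simp only [lapAugAct, inner_add_left]
  rw [Finset.sum_add_distrib, sum_inner_lapAct]
  congr 1
  · refine Finset.sum_congr rfl fun e _ => ?_
    simp only [inner_sub_left, inner_sub_right, inner_mv_transpose, inner_mv_mv (hτ e)]
    ring
  · rw [Finset.sum_eq_single ℓ (fun i _ hi => by rw [if_neg hi, inner_zero_left])
      (fun h => absurd (Finset.mem_univ ℓ) h), if_pos rfl, real_inner_smul_left, mul_assoc]

theorem lapAugAct_eq_zero_iff {ℓ : Fin n} {nh : EuclideanSpace ℝ (Fin 2)}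
    {p : Fin n → EuclideanSpace ℝ (Fin 2)} :
    lapAugAct n τ ℓ nh p = 0 ↔ IsConsistent τ p ∧ ⟪nh, p ℓ⟫ = 0 := by
  constructor
  · intro h
    have hform := sum_inner_lapAugAct hτ ℓ nh p p
    simp only [h, Pi.zero_apply, inner_zero_left, Finset.sum_const_zero] at hform
    have hsq : ∀ e ∈ Finset.univ, 0 ≤ ⟪p (eR e) - mv (τ e) (p (eL e)),
        p (eR e) - mv (τ e) (p (eL e))⟫ := fun e _ => real_inner_self_nonneg
    have hsum := Finset.sum_nonneg hsq
    have hnp : ⟪nh, p ℓ⟫ = 0 := by nlinarith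
    refine ⟨fun e => ?_, hnp⟩
    have := (Finset.sum_eq_zero_iff_of_nonneg hsq).mp (by nlinarith) e (Finset.mem_univ e)
    rwa [inner_self_eq_zero, sub_eq_zero] at this
  · rintro ⟨hp, hnp⟩
    ext1 i
    simp only [lapAugAct, lapAct_eq_zero_of_isConsistent hτ hp, hnp, mul_zero, zero_smul,
      ite_self, add_zero, Pi.zero_apply]

end QuadraticForm

section Configuration

variable {n : ℕ}

theorem Cfg.ext_blk {p q : Cfg n} (h : blk p = blk q) : p = q :=
  PiLp.ext fun x => congrFun (congrArg WithLp.ofLp (congrFun h x.1)) x.2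

theorem blk_smul (c : ℝ) (p : Cfg n) : blk (c • p) = c • blk p := rfl

theorem Cfg.inner_eq_sum_blk (p q : Cfg n) : ⟪p, q⟫ = ∑ i, ⟪blk p i, blk q i⟫ := by
  simp only [PiLp.inner_apply, Fintype.sum_prod_type]
  rfl

theorem continuous_blk (i : Fin n) : Continuous fun p : Cfg n => blk p i := by
  unfold blk
  fun_prop

end Configuration

section LaplacianMatrix

variable {n : ℕ} {τ : Fin (n - 1) → Matrix (Fin 2) (Fin 2) ℝ} {ℓ : Fin n}
  {nh : EuclideanSpace ℝ (Fin 2)} {Qm : Matrix (Fin n × Fin 2) (Fin n × Fin 2) ℝ}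
  (hQm : ∀ (p : Cfg n) (i : Fin n) (a : Fin 2),
    mvC Qm p (i, a) = lapAugAct n τ ℓ nh (blk p) i a)
include hQm

theorem blk_toEuclideanLin (p : Cfg n) :
    blk (toEuclideanLin Qm p) = lapAugAct n τ ℓ nh (blk p) :=
  funext fun i => PiLp.ext fun a => hQm p i a

variable (hτ : ∀ e, (τ e)ᵀ * τ e = 1)
include hτ

theorem inner_toEuclideanLin (p q : Cfg n) :
    ⟪toEuclideanLin Qm p, q⟫ =
      ∑ e, ⟪blk p (eR e) - mv (τ e) (blk p (eL e)), blk q (eR e) - mv (τ e) (blk q (eL e))⟫ +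
        2 * ⟪nh, blk p ℓ⟫ * ⟪nh, blk q ℓ⟫ := by
  rw [Cfg.inner_eq_sum_blk, blk_toEuclideanLin hQm, sum_inner_lapAugAct hτ]

theorem posSemidef_of_lapAugAct : Qm.PosSemidef := by
  refine isPositive_toEuclideanLin_iff.mp ⟨fun p q => ?_, fun p => ?_⟩
  · rw [real_inner_comm (toEuclideanLin Qm q), inner_toEuclideanLin hQm hτ,
      inner_toEuclideanLin hQm hτ]
    simp only [real_inner_comm (blk p _ - _), mul_right_comm _ ⟪nh, blk p ℓ⟫]
  · rw [RCLike.re_to_real, inner_toEuclideanLin hQm hτ]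
    have := Finset.sum_nonneg fun e (_ : e ∈ Finset.univ) =>
      real_inner_self_nonneg (x := blk p (eR e) - mv (τ e) (blk p (eL e)))
    nlinarith [sq_nonneg ⟪nh, blk p ℓ⟫]

theorem ker_toEuclideanLin_eq_span_V0 {S : Fin n → Matrix (Fin 2) (Fin 2) ℝ}
    (hS : ∀ e, S (eR e) = τ e * S (eL e)) (hSl : S ℓ = 1) {Lh : EuclideanSpace ℝ (Fin 2)}
    (hnh : nh ≠ 0) (hLh : ‖Lh‖ = 1) (hperp : ⟪nh, Lh⟫ = 0) :
    LinearMap.ker (toEuclideanLin Qm) = ℝ ∙ V0 S Lh := by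
  have hker : ∀ p, p ∈ LinearMap.ker (toEuclideanLin Qm) ↔
      IsConsistent τ (blk p) ∧ ⟪nh, blk p ℓ⟫ = 0 := fun p => by
    rw [LinearMap.mem_ker, ← lapAugAct_eq_zero_iff hτ, ← blk_toEuclideanLin hQm]
    exact ⟨fun h => by rw [h]; rfl, fun h => Cfg.ext_blk h⟩
  have hV0 : IsConsistent τ (blk (V0 S Lh)) := isConsistent_mv hS Lh
  have hV0ℓ : blk (V0 S Lh) ℓ = Lh := by
    change mv (S ℓ) Lh = Lh
    rw [hSl, mv_one]
  refine le_antisymm (fun p hp => ?_) ?_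
  · obtain ⟨hp, hpℓ⟩ := (hker p).mp hp
    refine Submodule.mem_span_singleton.mpr ⟨⟪Lh, blk p ℓ⟫, Cfg.ext_blk ?_⟩
    rw [blk_smul]
    refine (hV0.smul _).eq_of_apply_eq hτ hp (ℓ := ℓ) ?_
    rw [Pi.smul_apply, hV0ℓ]
    exact (eq_inner_smul_of_inner_eq_zero finrank_euclideanSpace_fin hnh hLh hperp hpℓ).symm
  · rw [Submodule.span_singleton_le_iff_mem, hker, hV0ℓ]
    exact ⟨hV0, hperp⟩

end LaplacianMatrix

section ReferenceConfiguration

variable {n : ℕ} {S : Fin n → Matrix (Fin 2) (Fin 2) ℝ} {Lh : EuclideanSpace ℝ (Fin 2)}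

theorem inner_V0 (p : Cfg n) : ⟪V0 S Lh, p⟫ = ⟪Lh, ∑ k, mv (S k)ᵀ (blk p k)⟫ := by
  rw [Cfg.inner_eq_sum_blk, inner_sum]
  refine Finset.sum_congr rfl fun k _ => ?_
  rw [real_inner_comm _ Lh, inner_mv_transpose]
  exact real_inner_comm _ _

theorem norm_V0_sq {τ : Fin (n - 1) → Matrix (Fin 2) (Fin 2) ℝ} (hτ : ∀ e, (τ e)ᵀ * τ e = 1)
    (hS : ∀ e, S (eR e) = τ e * S (eL e)) {ℓ : Fin n} (hSl : S ℓ = 1) (hLh : ‖Lh‖ = 1) :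
    ‖V0 S Lh‖ ^ 2 = n := by
  have hnorm : ∀ i, ‖mv (S i) Lh‖ = 1 := fun i => by
    rw [(isConsistent_mv hS Lh).norm_eq hτ i ℓ, hSl, mv_one, hLh]
  rw [← real_inner_self_eq_norm_sq, Cfg.inner_eq_sum_blk]
  change ∑ i, ⟪mv (S i) Lh, mv (S i) Lh⟫ = (n : ℝ)
  simp [hnorm]

end ReferenceConfiguration

theorem stmt1_general (n : ℕ)
    (τ : Fin (n - 1) → Matrix (Fin 2) (Fin 2) ℝ)
    (hτ : ∀ e, (τ e)ᵀ * τ e = 1)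
    (ℓ : Fin n) (nh Lh : EuclideanSpace ℝ (Fin 2))
    (hnh : ‖nh‖ = 1) (hLh : ‖Lh‖ = 1) (hperp : (inner ℝ nh Lh : ℝ) = 0)
    (S : Fin n → Matrix (Fin 2) (Fin 2) ℝ)
    (hSl : S ℓ = 1)
    (hSup : ∀ e : Fin (n - 1), (ℓ : ℕ) ≤ (e : ℕ) → S (eR e) = τ e * S (eL e))
    (hSdown : ∀ e : Fin (n - 1), (e : ℕ) < (ℓ : ℕ) → S (eL e) = (τ e)ᵀ * S (eR e))
    (Qm : Matrix (Fin n × Fin 2) (Fin n × Fin 2) ℝ)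
    (hQm : ∀ (p : Cfg n) (i : Fin n) (a : Fin 2),
      mvC Qm p (i, a) = lapAugAct n τ ℓ nh (blk p) i a)
    (p0 : Cfg n) (i : Fin n) :
    Tendsto (fun t : ℝ => blk (mvC (NormedSpace.exp ((-t) • Qm)) p0) i) atTop
      (𝓝 (((n : ℝ)⁻¹ *
          (inner ℝ Lh (∑ k : Fin n, mv (S k)ᵀ (blk p0 k)) : ℝ)) • mv (S i) Lh)) := by
  have hS : ∀ e, S (eR e) = τ e * S (eL e) := fun e => by
    rcases le_or_gt (ℓ : ℕ) e with h | h
    · exact hSup e h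
    · rw [hSdown e h, ← mul_assoc, mul_eq_one_comm.mp (hτ e), one_mul]
  have hker := ker_toEuclideanLin_eq_span_V0 hQm hτ hS hSl
    (norm_ne_zero_iff.mp (hnh ▸ one_ne_zero)) hLh hperp
  have hlim := (posSemidef_of_lapAugAct hQm hτ).tendsto_exp_neg_smul_mulVec p0
  rw [hker, Submodule.starProjection_singleton, norm_V0_sq hτ hS hSl hLh, inner_V0] at hlim
  convert ((continuous_blk i).tendsto _).comp hlim using 2
  · rfl
  · rw [blk_smul, Pi.smul_apply, RCLike.ofReal_real_eq_id, id, div_eq_inv_mul]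
    rfl

/-- For the augmented reflection-based Laplacian Q', each component of the
solution p(t) = exp(−tQ')p(0) of ṗ = −Q'p satisfies
lim_{t→∞} pᵢ(t) = (1/n)·SᵢL̂·⟨L̂, Σₖ Sₖᵀ pₖ(0)⟩. -/
theorem stmt1 (n : ℕ) (hn : 2 ≤ n)
    (τ : Fin (n - 1) → Matrix (Fin 2) (Fin 2) ℝ)
    (hτ : ∀ e, (τ e)ᵀ * τ e = 1)
    (ℓ : Fin n) (nh Lh : EuclideanSpace ℝ (Fin 2))
    (hnh : ‖nh‖ = 1) (hLh : ‖Lh‖ = 1) (hperp : (inner ℝ nh Lh : ℝ) = 0)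
    (S : Fin n → Matrix (Fin 2) (Fin 2) ℝ)
    (hSl : S ℓ = 1)
    (hSup : ∀ e : Fin (n - 1), (ℓ : ℕ) ≤ (e : ℕ) → S (eR e) = τ e * S (eL e))
    (hSdown : ∀ e : Fin (n - 1), (e : ℕ) < (ℓ : ℕ) → S (eL e) = (τ e)ᵀ * S (eR e))
    (Qm : Matrix (Fin n × Fin 2) (Fin n × Fin 2) ℝ)
    (hQm : ∀ (p : Cfg n) (i : Fin n) (a : Fin 2),
      mvC Qm p (i, a) = lapAugAct n τ ℓ nh (blk p) i a)
    (p0 : Cfg n) (i : Fin n) :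
    Tendsto (fun t : ℝ => blk (mvC (NormedSpace.exp ((-t) • Qm)) p0) i) atTop
      (𝓝 (((n : ℝ)⁻¹ *
          (inner ℝ Lh (∑ k : Fin n, mv (S k)ᵀ (blk p0 k)) : ℝ)) • mv (S i) Lh)) :=
  stmt1_general n τ hτ ℓ nh Lh hnh hLh hperp S hSl hSup hSdown Qm hQm p0 i
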